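/- Let m ≥ 2 be a natural number and let a_n = binom(mn, n)/((m−1)n + 1) ∈ ℚ be the n-th Fuss–Catalan number. Then for every natural number n, a_{n+1} = ∑ a_{i_1}·a_{i_2}···a_{i_m}, where the sum ranges over all m-tuples (i_1, …, i_m) of natural numbers with i_1 + ⋯ + i_m = n. (Fuss's generalization of Segner's recurrence, 1795.) -/

import Mathlib

/-!
The Fuss–Catalan numbers sit in the two-parameter family of Raney numbers
`R_{p,r}(n) = r/(pn + r) · binom(pn + r, n)`: `a_n = R_{m,1}(n)` and `a_{n+1} = R_{m,m}(n)`.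
The Raney numbers obey the Pascal-type rule `R_{p,r+1}(n+1) = R_{p,r}(n+1) + R_{p,r+p}(n)`, and a
double induction on `n` and `r` turns it into the convolution identity
`∑_{i+j=n} R_{p,1}(i) R_{p,r}(j) = R_{p,r+1}(n)`. Iterating, the `m`-fold convolution of
`R_{m,1}` is `R_{m,m}`, which is the recurrence.
-/

open Finset Finset.Nat Polynomial

theorem Finset.Nat.sum_antidiagonalTuple_succ {M : Type*} [AddCommMonoid M] (k n : ℕ)
    (f : (Fin (k + 1) → ℕ) → M) :
    ∑ t ∈ antidiagonalTuple (k + 1) n, f t =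
      ∑ p ∈ antidiagonal n, ∑ t ∈ antidiagonalTuple k p.2, f (Fin.cons p.1 t) := by
  simp only [Finset.sum, antidiagonalTuple, Multiset.Nat.antidiagonalTuple,
    List.Nat.antidiagonalTuple]
  simp only [List.flatMap_def, Multiset.map_coe, List.map_flatten, List.map_map, Function.comp_def,
    Multiset.sum_coe, List.sum_flatten, sum_map_val]
  rfl

theorem descPochhammer_succ_eval_left {R : Type*} [CommRing R] (n : ℕ) (x : R) :
    (descPochhammer R (n + 1)).eval x = x * (descPochhammer R n).eval (x - 1) := by
  simp [descPochhammer_succ_left, eval_comp]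

/-- `r/(pn + r) · binom(pn + r, n)`, written as `r · (pn + r - 1)⋯(pn + r - n + 1) / n!` for
`n ≥ 1`: dividing by `pn + r` would give the junk value `0` at `n = r = 0` instead of `1`. -/
noncomputable def raney (p r : ℕ) : ℕ → ℚ
  | 0 => 1
  | n + 1 => r * (descPochhammer ℚ n).eval (p * (n + 1) + r - 1 : ℚ) / (n + 1).factorial

section Raney

variable (p : ℕ)

@[simp] theorem raney_zero (r : ℕ) : raney p r 0 = 1 := rfl

theorem raney_zero_succ (n : ℕ) : raney p 0 (n + 1) = 0 := by simp [raney]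

theorem raney_succ_succ (r n : ℕ) :
    raney p (r + 1) (n + 1) = raney p r (n + 1) + raney p (r + p) n := by
  cases n with
  | zero => simp [raney]
  | succ n =>
    simp only [raney, Nat.factorial_succ (n + 1)]
    rw [descPochhammer_succ_eval_left, descPochhammer_succ_eval]
    push_cast
    ring_nf
    field_simp
    ring

theorem raney_self (n : ℕ) : raney p p n = raney p 1 (n + 1) := by
  cases n with
  | zero => simp [raney]
  | succ n =>
    simp only [raney, descPochhammer_succ_eval_left, Nat.factorial_succ (n + 1)]
    push_cast
    ring_nf
    field_simp

theorem raney_one_succ (n : ℕ) : raney p 1 (n + 1) = (p * (n + 1)).choose n / (n + 1) := by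
  have h := descPochhammer_eval_eq_descFactorial ℚ (p * (n + 1)) n
  rw [Nat.descFactorial_eq_factorial_mul_choose] at h
  simp only [raney, Nat.factorial_succ n]
  push_cast at h ⊢
  rw [add_sub_cancel_right, h]
  field_simp

theorem raney_one {p : ℕ} (hp : 1 ≤ p) (n : ℕ) :
    raney p 1 n = (p * n).choose n / ((p - 1) * n + 1 : ℕ) := by
  cases n with
  | zero => simp
  | succ n =>
    have hN : (p - 1) * (n + 1) + 1 = p * (n + 1) - n := by
      rw [Nat.sub_one_mul]
      have : n + 1 ≤ p * (n + 1) := Nat.le_mul_of_pos_left _ hp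
      omega
    have h := Nat.choose_succ_right_eq (p * (n + 1)) n
    rw [raney_one_succ, hN, div_eq_div_iff (by positivity) (by norm_cast; omega)]
    exact_mod_cast h.symm

theorem sum_antidiagonal_raney_one_mul (n r : ℕ) :
    ∑ q ∈ antidiagonal n, raney p 1 q.1 * raney p r q.2 = raney p (r + 1) n := by
  induction n generalizing r with
  | zero => simp
  | succ n ihn =>
    induction r with
    | zero => simp [sum_antidiagonal_succ', raney_zero_succ]
    | succ r ihr =>
      calc ∑ q ∈ antidiagonal (n + 1), raney p 1 q.1 * raney p (r + 1) q.2
          = ∑ q ∈ antidiagonal (n + 1), raney p 1 q.1 * raney p r q.2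
            + ∑ q ∈ antidiagonal n, raney p 1 q.1 * raney p (r + p) q.2 := by
            simp only [sum_antidiagonal_succ', raney_succ_succ, mul_add, sum_add_distrib,
              raney_zero]
            ring
        _ = raney p (r + 1 + 1) (n + 1) := by
            rw [ihr, ihn, raney_succ_succ p (r + 1), raney_succ_succ p r, Nat.add_right_comm r p 1]

theorem sum_antidiagonalTuple_prod_raney_one (r n : ℕ) :
    ∑ t ∈ antidiagonalTuple r n, ∏ i, raney p 1 (t i) = raney p r n := by
  induction r generalizing n with
  | zero => cases n <;> simp [raney_zero_succ]
  | succ r ih =>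
    simp only [sum_antidiagonalTuple_succ, Fin.prod_univ_succ, Fin.cons_zero, Fin.cons_succ,
      ← mul_sum, ih, sum_antidiagonal_raney_one_mul]

end Raney

/-- Fuss's generalization of Segner's recurrence (1795): for the Fuss–Catalan
numbers `aₙ = binom(mn, n)/((m−1)n + 1)` with `m ≥ 2`,
`a_{n+1} = ∑_{i₁+⋯+iₘ = n} a_{i₁}·a_{i₂}⋯a_{iₘ}`. -/
theorem fussCatalan_segner (m : ℕ) (hm : 2 ≤ m)
    (a : ℕ → ℚ) (ha : ∀ n, a n = (Nat.choose (m * n) n : ℚ) / (((m - 1) * n + 1 : ℕ) : ℚ))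
    (n : ℕ) :
    a (n + 1) = ∑ t ∈ Finset.Nat.antidiagonalTuple m n, ∏ j : Fin m, a (t j) := by
  have ha_raney : a = raney m 1 := funext fun k => by rw [ha, raney_one (by omega)]
  rw [ha_raney, sum_antidiagonalTuple_prod_raney_one, raney_self]
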